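/- Let S and T be finite flat local commutative group schemes over O_L, given by their Hopf algebras A = O(S) and B = O(T), each of which is a local ring. Let φ : B → A be a homomorphism of Hopf O_L-algebras (a morphism f : S → T), let J_A = ker ε_A and J_B = ker ε_B be the augmentation ideals, and let Tf : TS → TT be the map Hom_{O_L}(J_A/J_A², L/O_L) → Hom_{O_L}(J_B/J_B², L/O_L) obtained by precomposition with the O_L-linear map J_B/J_B² → J_A/J_A² induced by φ. Then f is a closed embedding (i.e., φ is surjective) if and only if Tf is injective. -/

import Mathlib

open scoped TensorProduct

noncomputable section

/-- The `n`-th convolution power of the identity map of a bialgebra `A` over `R`: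
`[0] = η ∘ ε` and `[n+1] = mult ∘ ([n] ⊗ id) ∘ Δ`. It corresponds to multiplication
by `n` on the group scheme `Spec A`. -/
def convPow (R A : Type) [CommRing R] [CommRing A] [Bialgebra R A] : ℕ → (A →ₗ[R] A)
  | 0 => Algebra.linearMap R A ∘ₗ Coalgebra.counit
  | n + 1 => LinearMap.mul' R A ∘ₗ
      TensorProduct.map (convPow R A n) LinearMap.id ∘ₗ Coalgebra.comul

/-- The bialgebra `A` over `R` is cocommutative (i.e. `Spec A` is a commutative
group scheme). -/
def IsCocomm (R A : Type) [CommRing R] [CommRing A] [Bialgebra R A] : Prop :=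
  (TensorProduct.comm R A A).toLinearMap ∘ₗ (Coalgebra.comul : A →ₗ[R] A ⊗[R] A)
    = Coalgebra.comul

/-- The Hopf algebra `A` over `R` represents a `p`-group scheme:
`[p^N] = η ∘ ε` for some `N`. -/
def IsPGroupScheme (p : ℕ) (R A : Type) [CommRing R] [CommRing A] [Bialgebra R A] : Prop :=
  ∃ N : ℕ, convPow R A (p ^ N) = Algebra.linearMap R A ∘ₗ Coalgebra.counit

variable (O L : Type) [CommRing O] [IsDomain O] [IsDiscreteValuationRing O]
  [IsAdicComplete (IsLocalRing.maximalIdeal O) O]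
  [Field L] [Algebra O L] [IsFractionRing O L] [CharZero L]

/-- The augmentation ideal `J = ker ε` of the Hopf algebra `A`. -/
def augIdeal (A : Type) [CommRing A] [HopfAlgebra O A] : Ideal A :=
  RingHom.ker (Bialgebra.counitAlgHom O A)

/-- The `O`-module `L/O`. -/
abbrev LModO := L ⧸ LinearMap.range (Algebra.linearMap O L)

/-- The tangent space `TS = Hom_{O}(J/J², L/O)` of `S = Spec A`, realized as the set of those
`O`-linear maps `ψ : A →ₗ[O] L/O` with `ψ(1) = 0` which kill all products of two elements of
the augmentation ideal `J`; via the canonical splitting `A = O·1 ⊕ J` these correspond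
exactly to the `O`-linear maps `J/J² → L/O`. -/
def tangentSpace (A : Type) [CommRing A] [HopfAlgebra O A] :
    Set (A →ₗ[O] LModO O L) :=
  {ψ | ψ 1 = 0 ∧ ∀ x ∈ augIdeal O A, ∀ y ∈ augIdeal O A, ψ (x * y) = 0}

lemma baer_LModO : Module.Baer O (LModO O L) := by
  intro I g
  obtain ⟨a, ha⟩ := (IsPrincipalIdealRing.principal I).principal
  by_cases h0 : a = 0
  · refine ⟨0, fun x mem => ?_⟩
    have hx : x = 0 := by
      have h := ha ▸ mem
      obtain ⟨c, hc⟩ := Submodule.mem_span_singleton.mp h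
      simp [h0] at hc
      exact hc.symm
    have hz : (⟨x, mem⟩ : I) = 0 := by
      apply Subtype.ext; simpa using hx
    simp [hz]
  · have ha' : a ∈ I := by rw [ha]; exact Submodule.mem_span_singleton_self a
    obtain ⟨l, hl⟩ := Submodule.Quotient.mk_surjective _ (g ⟨a, ha'⟩)
    have haL : algebraMap O L a ≠ 0 := fun h =>
      h0 (IsFractionRing.injective O L (by simpa using h))
    refine ⟨LinearMap.toSpanSingleton O _
      (Submodule.Quotient.mk ((algebraMap O L a)⁻¹ * l)), fun x mem => ?_⟩
    obtain ⟨c, hc⟩ := Submodule.mem_span_singleton.mp (ha ▸ mem)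
    have hsub : (⟨x, mem⟩ : I) = c • ⟨a, ha'⟩ := by
      apply Subtype.ext; simpa using hc.symm
    have hmka : a • (Submodule.Quotient.mk ((algebraMap O L a)⁻¹ * l) : LModO O L)
        = Submodule.Quotient.mk l := by
      rw [← Submodule.Quotient.mk_smul]
      congr 1
      rw [Algebra.smul_def, ← mul_assoc, mul_inv_cancel₀ haL, one_mul]
    rw [hsub, map_smul, ← hl, LinearMap.toSpanSingleton_apply, ← hc, smul_eq_mul,
      mul_smul, hmka]

lemma injective_LModO : Module.Injective O (LModO O L) := (baer_LModO O L).injective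

lemma exists_functional {M : Type} [AddCommGroup M] [Module O M] {q : M} (hq : q ≠ 0) :
    ∃ h : M →ₗ[O] LModO O L, h q ≠ 0 := by
  classical
  set σ : O →ₗ[O] M := LinearMap.toSpanSingleton O M q with hσ
  obtain ⟨g, hg⟩ := (IsPrincipalIdealRing.principal (LinearMap.ker σ)).principal
  have hgu : ¬ IsUnit g := by
    intro hu
    have h1 : (1:O) ∈ LinearMap.ker σ := by
      rw [hg]
      rw [show Submodule.span O {g} = (Ideal.span {g} : Ideal O) from rfl,
        Ideal.span_singleton_eq_top.mpr hu]
      trivial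
    have := LinearMap.mem_ker.mp h1
    simp [hσ, LinearMap.toSpanSingleton_apply] at this
    exact hq this
  obtain ⟨ϖ, hϖ⟩ := IsDiscreteValuationRing.exists_irreducible O
  set u : O := if g = 0 then ϖ else g with hu
  have hu0 : u ≠ 0 := by
    by_cases h : g = 0 <;> simp [hu, h, hϖ.ne_zero]
  have huNU : ¬ IsUnit u := by
    by_cases h : g = 0 <;> simp [hu, h, hϖ.not_isUnit, hgu]
  have huL : algebraMap O L u ≠ 0 := fun h =>
    hu0 (IsFractionRing.injective O L (by simpa using h))
  set t : LModO O L := Submodule.Quotient.mk ((algebraMap O L u)⁻¹) with ht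
  have htne : t ≠ 0 := by
    rw [ht, Ne, Submodule.Quotient.mk_eq_zero]
    rintro ⟨w, hw⟩
    simp only [Algebra.linearMap_apply] at hw
    have : algebraMap O L (w * u) = algebraMap O L 1 := by
      rw [map_mul, hw, inv_mul_cancel₀ huL, map_one]
    exact huNU (IsUnit.of_mul_eq_one (a := u) w (by
      have := IsFractionRing.injective O L this
      linear_combination this))
  have hgt : g • t = 0 := by
    by_cases h : g = 0
    · simp [h]
    · rw [ht, ← Submodule.Quotient.mk_smul, Submodule.Quotient.mk_eq_zero]
      refine ⟨1, ?_⟩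
      have : u = g := by simp [hu, h]
      rw [this, Algebra.linearMap_apply, map_one, Algebra.smul_def, mul_inv_cancel₀]
      rw [this] at huL
      exact huL
  set τ : O →ₗ[O] LModO O L := LinearMap.toSpanSingleton O _ t with hτ
  have hker : LinearMap.ker σ ≤ LinearMap.ker τ := by
    intro x hx
    obtain ⟨c, hc⟩ := Submodule.mem_span_singleton.mp (hg ▸ hx)
    rw [LinearMap.mem_ker, hτ, LinearMap.toSpanSingleton_apply, ← hc, smul_eq_mul,
      mul_smul, hgt, smul_zero]
  obtain ⟨h, hh⟩ := (injective_LModO O L).out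
      ((LinearMap.range σ).subtype ∘ₗ (σ.quotKerEquivRange).toLinearMap)
      ((Submodule.injective_subtype _).comp σ.quotKerEquivRange.injective)
      (Submodule.liftQ (LinearMap.ker σ) τ hker)
  refine ⟨h, ?_⟩
  have h1 := hh (Submodule.Quotient.mk 1)
  have e1 : ((LinearMap.range σ).subtype ∘ₗ σ.quotKerEquivRange.toLinearMap)
      (Submodule.Quotient.mk 1) = q := by
    simp only [LinearMap.coe_comp, Function.comp_apply, LinearEquiv.coe_coe,
      Submodule.coe_subtype]
    rw [show ((σ.quotKerEquivRange (Submodule.Quotient.mk 1) : LinearMap.range σ) : M)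
      = σ 1 from LinearMap.quotKerEquivRange_apply_mk σ 1]
    simp [hσ]
  rw [e1] at h1
  rw [h1]
  rw [Submodule.liftQ_apply, hτ, LinearMap.toSpanSingleton_apply, one_smul]
  exact htne

lemma pow_maximalIdeal_le (A : Type) [CommRing A] [IsLocalRing A] [Algebra O A]
    [Module.Finite O A] :
    ∃ k : ℕ, IsLocalRing.maximalIdeal A ^ k ≤
      Ideal.map (algebraMap O A) (IsLocalRing.maximalIdeal O) := by
  haveI : IsNoetherianRing A :=
    isNoetherianRing_iff.mpr (isNoetherian_of_tower O (inferInstance : IsNoetherian O A))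
  set m := IsLocalRing.maximalIdeal O with hm
  set Im := Ideal.map (algebraMap O A) m with hIm
  have hrad : IsLocalRing.maximalIdeal A ≤ Im.radical := by
    rw [Ideal.radical_eq_sInf]
    refine le_sInf ?_
    rintro P ⟨hP1, hP2⟩
    haveI := hP2
    suffices hmax : P.IsMaximal by
      rw [IsLocalRing.eq_maximalIdeal hmax]
    refine Ideal.Quotient.maximal_of_isField _ ?_
    have hker : ∀ x ∈ m, ((Ideal.Quotient.mk P).comp (algebraMap O A)) x = 0 := by
      intro x hx
      show Ideal.Quotient.mk P (algebraMap O A x) = 0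
      rw [Ideal.Quotient.eq_zero_iff_mem]
      exact hP1 (Ideal.mem_map_of_mem _ hx)
    haveI : m.IsMaximal := IsLocalRing.maximalIdeal.isMaximal O
    letI : Field (O ⧸ m) := Ideal.Quotient.field m
    set f' := Ideal.Quotient.lift m ((Ideal.Quotient.mk P).comp (algebraMap O A)) hker with hf'
    letI : Algebra (O ⧸ m) (A ⧸ P) := f'.toAlgebra
    haveI : IsScalarTower O (O ⧸ m) (A ⧸ P) := IsScalarTower.of_algebraMap_eq fun x => by
      rw [RingHom.algebraMap_toAlgebra]
      rfl
    haveI : Module.Finite O (A ⧸ P) :=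
      Module.Finite.of_surjective (Ideal.Quotient.mkₐ O P).toLinearMap
        (Ideal.Quotient.mkₐ_surjective O P)
    haveI : Algebra.IsIntegral O (A ⧸ P) := Algebra.IsIntegral.of_finite O _
    haveI : Algebra.IsIntegral (O ⧸ m) (A ⧸ P) :=
      ⟨fun x => IsIntegral.tower_top (R := O) (Algebra.IsIntegral.isIntegral x)⟩
    have hinj : Function.Injective (algebraMap (O ⧸ m) (A ⧸ P)) := by
      rw [RingHom.algebraMap_toAlgebra]
      exact f'.injective
    exact (Algebra.IsIntegral.isField_iff_isField hinj).mp (Field.toIsField (O ⧸ m))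
  obtain ⟨n, hn⟩ := Ideal.exists_radical_pow_le_of_fg Im (IsNoetherian.noetherian _)
  exact ⟨n, le_trans (Ideal.pow_right_mono hrad n) hn⟩

/-- Theorem 4 II of the paper. Let `S = Spec A` and `T = Spec B` be finite
flat local commutative group schemes over `O_L` and let `f : S → T` be a morphism, given
contravariantly by the homomorphism of Hopf `O_L`-algebras `φ : B → A`. Then `f` is a closed
embedding (i.e. `φ` is surjective) if and only if the induced map of tangent spaces
`Tf : TS → TT`, `ψ ↦ ψ ∘ φ`, is injective. -/
theorem statement9 (p : ℕ) [Fact p.Prime] [CharP (IsLocalRing.ResidueField O) p]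
    (A B : Type) [CommRing A] [HopfAlgebra O A] [CommRing B] [HopfAlgebra O B]
    [IsLocalRing A] [IsLocalRing B]
    [Module.Finite O A] [Module.Projective O A]
    [Module.Finite O B] [Module.Projective O B]
    (hcA : IsCocomm O A) (hcB : IsCocomm O B)
    (φ : B →ₐc[O] A) :
    Function.Surjective φ ↔
      Set.InjOn (fun ψ : A →ₗ[O] LModO O L => ψ ∘ₗ ((φ : B →ₐ[O] A) : B →ₗ[O] A))
        (tangentSpace O L A) := by
  classical
  set εA := Bialgebra.counitAlgHom O A with hεA
  set εB := Bialgebra.counitAlgHom O B with hεB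
  set φA : B →ₐ[O] A := (φ : B →ₐ[O] A) with hφA
  constructor
  · intro hs ψ₁ h₁ ψ₂ h₂ h12
    have h12' : ψ₁ ∘ₗ (φA : B →ₗ[O] A) = ψ₂ ∘ₗ (φA : B →ₗ[O] A) := h12
    ext a
    obtain ⟨b, rfl⟩ := hs a
    exact LinearMap.congr_fun h12' b
  · intro hinj
    set JA : Ideal A := augIdeal O A with hJA
    set JB : Ideal B := augIdeal O B with hJB
    set I : Ideal A := Ideal.span (⇑φA '' (JB : Set B)) with hI
    have hJAmem : ∀ x : A, x ∈ JA ↔ εA x = 0 := fun _ => RingHom.mem_ker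
    have hJBmem : ∀ x : B, x ∈ JB ↔ εB x = 0 := fun _ => RingHom.mem_ker
    have hcount : ∀ b : B, εA (φA b) = εB b := by
      intro b
      show (Bialgebra.counitAlgHom O A) (φ b) = (Bialgebra.counitAlgHom O B) b
      simp only [Bialgebra.counitAlgHom_apply]
      exact CoalgHomClass.counit_comp_apply φ b
    have hφJB : ∀ b ∈ JB, φA b ∈ JA := by
      intro b hb
      rw [hJAmem, hcount]
      exact (hJBmem b).mp hb
    have hI_le_JA : I ≤ JA := Ideal.span_le.mpr (by rintro _ ⟨b, hb, rfl⟩; exact hφJB b hb)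
    have hJAne : JA ≠ ⊤ := by
      intro h
      have h1 : (1:A) ∈ JA := h ▸ Submodule.mem_top
      rw [hJAmem] at h1
      simp at h1
    set N : Submodule O A := Submodule.span O {(1:A)} ⊔ (JA * JA).restrictScalars O
        ⊔ I.restrictScalars O with hN
    have h1N : (1:A) ∈ N :=
      Submodule.mem_sup_left (Submodule.mem_sup_left (Submodule.mem_span_singleton_self 1))
    have hJJN : ∀ z ∈ JA * JA, z ∈ N := fun z hz =>
      Submodule.mem_sup_left (Submodule.mem_sup_right (by rwa [Submodule.restrictScalars_mem]))
    have hIN : ∀ z ∈ I, z ∈ N := fun z hz =>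
      Submodule.mem_sup_right (by rwa [Submodule.restrictScalars_mem])
    have hNtop : N = ⊤ := by
      by_contra hne
      have hex : ∃ a : A, a ∉ N := by
        by_contra hfa
        push_neg at hfa
        exact hne (Submodule.eq_top_iff'.mpr hfa)
      obtain ⟨a, haN⟩ := hex
      have hq : (Submodule.Quotient.mk a : A ⧸ N) ≠ 0 :=
        fun h => haN ((Submodule.Quotient.mk_eq_zero N).mp h)
      obtain ⟨h, hh⟩ := exists_functional O L hq
      set ψ : A →ₗ[O] LModO O L := h ∘ₗ N.mkQ with hψ
      have hψN : ∀ x ∈ N, ψ x = 0 := by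
        intro x hx
        have : N.mkQ x = 0 := (Submodule.Quotient.mk_eq_zero N).mpr hx
        simp [hψ, this]
      have hψtan : ψ ∈ tangentSpace O L A := by
        refine ⟨hψN 1 h1N, fun x hx y hy => ?_⟩
        exact hψN _ (hJJN _ (Ideal.mul_mem_mul hx hy))
      have h0tan : (0 : A →ₗ[O] LModO O L) ∈ tangentSpace O L A :=
        ⟨rfl, fun _ _ _ _ => rfl⟩
      have hcomp : ψ ∘ₗ ((φ : B →ₐ[O] A) : B →ₗ[O] A)
          = (0 : A →ₗ[O] LModO O L) ∘ₗ ((φ : B →ₐ[O] A) : B →ₗ[O] A) := by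
        ext b
        simp only [LinearMap.coe_comp, Function.comp_apply, LinearMap.zero_comp,
          LinearMap.zero_apply, AlgHom.toLinearMap_apply]
        have hdec : φA b = algebraMap O A (εB b) + φA (b - algebraMap O B (εB b)) := by
          rw [map_sub, AlgHom.commutes]
          ring
        have h1 : ψ (algebraMap O A (εB b)) = 0 := by
          rw [Algebra.algebraMap_eq_smul_one, map_smul, hψN 1 h1N, smul_zero]
        have h2 : ψ (φA (b - algebraMap O B (εB b))) = 0 := by
          apply hψN
          apply hIN
          apply Ideal.subset_span
          refine ⟨b - algebraMap O B (εB b), ?_, rfl⟩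
          rw [SetLike.mem_coe, hJBmem]
          rw [map_sub, AlgHom.commutes]
          simp
        show ψ (φA b) = 0
        rw [hdec, map_add, h1, h2, add_zero]
      have hψ0 : ψ = 0 := hinj hψtan h0tan hcomp
      apply hh
      have : ψ a = 0 := by rw [hψ0]; rfl
      simpa [hψ] using this
    -- Step B : JA ≤ I
    have hJsub : JA ≤ JA * JA ⊔ I := by
      intro x hx
      have hxN : x ∈ N := hNtop ▸ Submodule.mem_top
      obtain ⟨y, hy, z, hz, hyz⟩ := Submodule.mem_sup.mp hxN
      obtain ⟨w, hw, v, hv, hwv⟩ := Submodule.mem_sup.mp hy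
      obtain ⟨c, hc⟩ := Submodule.mem_span_singleton.mp hw
      rw [Submodule.restrictScalars_mem] at hv hz
      have hfx : x = c • (1:A) + v + z := by rw [hc, hwv, hyz]
      have hεv : εA v = 0 := (hJAmem v).mp (Ideal.mul_le_left hv)
      have hεz : εA z = 0 := (hJAmem z).mp (hI_le_JA hz)
      have hεx : εA x = 0 := (hJAmem x).mp hx
      have hc0 : c = 0 := by
        have hcalc : εA x = c • εA (1:A) + εA v + εA z := by
          rw [hfx, map_add, map_add, map_smul]
        rw [hεv, hεz, hεx, map_one, add_zero, add_zero, smul_eq_mul, mul_one] at hcalc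
        exact hcalc.symm
      rw [hfx, hc0, zero_smul, zero_add]
      exact Submodule.add_mem_sup hv hz
    haveI : IsNoetherianRing A :=
      isNoetherianRing_iff.mpr (isNoetherian_of_tower O (inferInstance : IsNoetherian O A))
    have hItop : I ≠ ⊤ := fun h => hJAne (top_le_iff.mp (h ▸ hI_le_JA))
    have hJI : JA ≤ I := by
      set mkI := Ideal.Quotient.mk I with hmkI
      haveI : Nontrivial (A ⧸ I) := Ideal.Quotient.nontrivial_iff.mpr hItop
      haveI : IsLocalRing (A ⧸ I) := IsLocalRing.of_surjective' mkI Ideal.Quotient.mk_surjective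
      set J' : Ideal (A ⧸ I) := Ideal.map mkI JA with hJ'
      have hsm : J' ≤ J' • J' := by
        rw [Ideal.smul_eq_mul, hJ', ← Ideal.map_mul]
        calc Ideal.map mkI JA ≤ Ideal.map mkI (JA * JA ⊔ I) := Ideal.map_mono hJsub
        _ = Ideal.map mkI (JA * JA) ⊔ Ideal.map mkI I := Ideal.map_sup _ _ _
        _ = Ideal.map mkI (JA * JA) := by
            rw [hmkI, Ideal.map_quotient_self, sup_bot_eq]
      have hjac : J' ≤ Ideal.jacobson ⊥ := by
        rw [IsLocalRing.jacobson_eq_maximalIdeal (⊥ : Ideal (A ⧸ I)) bot_ne_top]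
        refine Ideal.map_le_iff_le_comap.mpr ?_
        have hcm : (Ideal.comap mkI (IsLocalRing.maximalIdeal (A ⧸ I))).IsMaximal :=
          Ideal.comap_isMaximal_of_surjective mkI Ideal.Quotient.mk_surjective
        rw [IsLocalRing.eq_maximalIdeal hcm]
        exact IsLocalRing.le_maximalIdeal hJAne
      have hbot : J' = ⊥ :=
        Submodule.eq_bot_of_le_smul_of_le_jacobson_bot J' J' (IsNoetherian.noetherian J') hsm hjac
      have hle : JA ≤ Ideal.comap mkI ⊥ := Ideal.map_le_iff_le_comap.mp (le_of_eq hbot)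
      rwa [← RingHom.ker_eq_comap_bot, hmkI, Ideal.mk_ker] at hle
    -- Step C : A = C + I^n
    set C : Subalgebra O A := φA.range with hC
    set Cs : Submodule O A := Subalgebra.toSubmodule C with hCs
    have hmemCs : ∀ b : B, φA b ∈ Cs := fun b => ⟨b, rfl⟩
    have hCmul : ∀ x ∈ Cs, ∀ y ∈ Cs, x * y ∈ Cs := fun x hx y hy =>
      (Subalgebra.mul_mem C hx hy : x * y ∈ C)
    have hstep0 : ∀ a : A, a ∈ Cs ⊔ I.restrictScalars O := by
      intro a
      have h2 : a - algebraMap O A (εA a) ∈ JA := by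
        rw [hJAmem, map_sub, AlgHom.commutes]
        simp
      have hsplit : a = algebraMap O A (εA a) + (a - algebraMap O A (εA a)) := by ring
      rw [hsplit]
      exact Submodule.add_mem_sup (C.algebraMap_mem (εA a))
        (by rw [Submodule.restrictScalars_mem]; exact hJI h2)
    have hPn : ∀ n : ℕ, ∀ x ∈ (I ^ n : Ideal A), x ∈ Cs ⊔ (I ^ (n+1)).restrictScalars O := by
      intro n
      induction n with
      | zero =>
        intro x _
        simpa [pow_one] using hstep0 x
      | succ n ih =>
        intro x hx
        rw [pow_succ] at hx
        have hmul : ∀ y ∈ I, ∀ m ∈ (I ^ n : Ideal A),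
            m * y ∈ Cs ⊔ (I ^ (n+2)).restrictScalars O := by
          intro y hy
          refine Submodule.span_induction (p := fun y _ => ∀ m ∈ (I ^ n : Ideal A),
              m * y ∈ Cs ⊔ (I ^ (n+2)).restrictScalars O) ?_ ?_ ?_ ?_ hy
          · rintro _ ⟨b, hb, rfl⟩ m hm
            obtain ⟨cc, hcc, z, hz, hcz⟩ := Submodule.mem_sup.mp (ih m hm)
            rw [Submodule.restrictScalars_mem] at hz
            rw [← hcz, add_mul]
            refine Submodule.add_mem_sup (hCmul _ hcc _ (hmemCs b)) ?_
            rw [Submodule.restrictScalars_mem]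
            have hzb : z * φA b ∈ (I ^ (n+1) : Ideal A) * I :=
              Ideal.mul_mem_mul hz (Ideal.subset_span ⟨b, hb, rfl⟩)
            rwa [← pow_succ] at hzb
          · intro m _
            rw [mul_zero]
            exact Submodule.zero_mem _
          · intro y₁ y₂ _ _ ih₁ ih₂ m hm
            rw [mul_add]
            exact Submodule.add_mem _ (ih₁ m hm) (ih₂ m hm)
          · intro a y _ ihy m hm
            rw [smul_eq_mul, show m * (a * y) = (m * a) * y by ring]
            exact ihy (m * a) (Ideal.mul_mem_right a _ hm)
        exact Submodule.mul_induction_on hx (fun m hm y hy => hmul y hy m hm)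
          (fun x₁ x₂ h₁ h₂ => Submodule.add_mem _ h₁ h₂)
    have hchain : ∀ n : ℕ, ∀ a : A, a ∈ Cs ⊔ (I ^ (n+1)).restrictScalars O := by
      intro n
      induction n with
      | zero => intro a; simpa [pow_one] using hstep0 a
      | succ n ih =>
        intro a
        obtain ⟨cc, hcc, z, hz, hcz⟩ := Submodule.mem_sup.mp (ih a)
        rw [Submodule.restrictScalars_mem] at hz
        obtain ⟨c₂, hc₂, z₂, hz₂, hcz₂⟩ := Submodule.mem_sup.mp (hPn (n+1) z hz)
        rw [← hcz, ← hcz₂]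
        exact Submodule.add_mem _ (Submodule.mem_sup_left hcc)
          (Submodule.add_mem _ (Submodule.mem_sup_left hc₂) (Submodule.mem_sup_right hz₂))
    -- Step D : conclude
    obtain ⟨k, hk⟩ := pow_maximalIdeal_le O A
    have hIm : I ≤ IsLocalRing.maximalIdeal A :=
      le_trans hI_le_JA (IsLocalRing.le_maximalIdeal hJAne)
    have hIk : (I ^ (k+1) : Ideal A) ≤
        Ideal.map (algebraMap O A) (IsLocalRing.maximalIdeal O) :=
      le_trans (le_trans (Ideal.pow_le_pow_right (Nat.le_succ k))
        (Ideal.pow_right_mono hIm k)) hk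
    have htop : (⊤ : Submodule O A) ≤ Cs ⊔ (IsLocalRing.maximalIdeal O) • (⊤ : Submodule O A) := by
      intro a _
      obtain ⟨cc, hcc, z, hz, hcz⟩ := Submodule.mem_sup.mp (hchain k a)
      rw [Submodule.restrictScalars_mem] at hz
      have hz' : z ∈ (IsLocalRing.maximalIdeal O) • (⊤ : Submodule O A) := by
        rw [Ideal.smul_top_eq_map, Submodule.restrictScalars_mem]
        exact hIk hz
      rw [← hcz]
      exact Submodule.add_mem_sup hcc hz'
    have hCstop : (⊤ : Submodule O A) ≤ Cs := by
      refine Submodule.le_of_le_smul_of_le_jacobson_bot Module.Finite.fg_top ?_ htop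
      rw [IsLocalRing.jacobson_eq_maximalIdeal (⊥ : Ideal O) bot_ne_top]
    intro a
    obtain ⟨b, hb⟩ := hCstop (Submodule.mem_top : a ∈ ⊤)
    exact ⟨b, hb⟩
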